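/- If a labeled graph G is realisable (its underlying simple graph is a circle graph) and G' is obtained from G by a finite sequence of graph-moves Ω4, Ω4' and deletions of vertices, then G' is realisable. In particular, the class of circle graphs is closed under local complementation, under pivoting along an edge, and under taking induced subgraphs. -/

import Mathlib

/-- A chord diagram on `n` chords: a fixed-point-free involution of the `2n`
points of a circle (the points are `Fin (2*n)` in cyclic order, the chords are
the orbits `{x, pair x}`). -/
structure ChordDiagram (n : ℕ) where
  pair : Fin (2 * n) → Fin (2 * n)
  invol : ∀ x, pair (pair x) = x
  fpf : ∀ x, pair x ≠ x

namespace ChordDiagram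

/-- Two chords (given by endpoints `x`, `y`) are linked iff their endpoint pairs
interleave in the cyclic order, i.e. exactly one endpoint of one chord lies
strictly between the two endpoints of the other. -/
def Linked {n : ℕ} (D : ChordDiagram n) (x y : Fin (2 * n)) : Prop :=
  (min x (D.pair x) < min y (D.pair y) ∧ min y (D.pair y) < max x (D.pair x) ∧
      max x (D.pair x) < max y (D.pair y)) ∨
  (min y (D.pair y) < min x (D.pair x) ∧ min x (D.pair x) < max y (D.pair y) ∧
      max y (D.pair y) < max x (D.pair x))

/-- The intersection graph of a chord diagram: vertices are the chords (each
represented by its smaller endpoint), two chords adjacent iff they are linked. -/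
def igraph {n : ℕ} (D : ChordDiagram n) :
    SimpleGraph {p : Fin (2 * n) // p < D.pair p} where
  Adj c d := D.Linked c.1 d.1
  symm := by
    refine ⟨?_⟩
    intro c d h
    unfold Linked at *
    tauto
  loopless := by
    refine ⟨?_⟩
    intro c h
    rcases h with ⟨h1, -, -⟩ | ⟨h1, -, -⟩ <;> exact absurd h1 (lt_irrefl _)

end ChordDiagram

/-- A simple graph is *realisable* (is a circle graph) if it is isomorphic to
the intersection graph of some chord diagram. -/
def IsCircleGraph {V : Type*} (G : SimpleGraph V) : Prop :=
  ∃ (n : ℕ) (D : ChordDiagram n), Nonempty (G ≃g D.igraph)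
/-- The local complement `LC(G;v)`: toggle the adjacency of every pair of
distinct vertices that are both adjacent to `v`. -/
def SimpleGraph.localComp {V : Type*} (G : SimpleGraph V) (v : V) :
    SimpleGraph V where
  Adj x y := Xor' (G.Adj x y) (x ≠ y ∧ G.Adj v x ∧ G.Adj v y)
  symm := by
    refine ⟨?_⟩
    intro x y h
    have h1 := G.adj_comm x y
    have h2 : (x ≠ y) ↔ (y ≠ x) := ne_comm
    unfold Xor' Xor at *
    tauto
  loopless := by
    refine ⟨?_⟩
    intro x h
    rcases h with ⟨h1, -⟩ | ⟨⟨h1, -⟩, -⟩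
    · exact G.loopless.irrefl x h1
    · exact h1 rfl

/-- The pivot `piv(G;u,v)`: toggle the adjacency of every pair of distinct
vertices `x, y ∉ {u,v}` such that (up to swapping `x` and `y`) `x` is adjacent
to `u`, `y` is adjacent to `v`, and `x` is not adjacent to `v` or `y` is not
adjacent to `u`. -/
def SimpleGraph.pivot {V : Type*} (G : SimpleGraph V) (u v : V) :
    SimpleGraph V where
  Adj x y := Xor' (G.Adj x y)
    (x ≠ y ∧ x ≠ u ∧ x ≠ v ∧ y ≠ u ∧ y ≠ v ∧
      ((G.Adj u x ∧ G.Adj v y ∧ (¬ G.Adj v x ∨ ¬ G.Adj u y)) ∨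
       (G.Adj u y ∧ G.Adj v x ∧ (¬ G.Adj v y ∨ ¬ G.Adj u x))))
  symm := by
    refine ⟨?_⟩
    intro x y h
    have psymm : ∀ a b : V,
        (a ≠ b ∧ a ≠ u ∧ a ≠ v ∧ b ≠ u ∧ b ≠ v ∧
          ((G.Adj u a ∧ G.Adj v b ∧ (¬ G.Adj v a ∨ ¬ G.Adj u b)) ∨
           (G.Adj u b ∧ G.Adj v a ∧ (¬ G.Adj v b ∨ ¬ G.Adj u a)))) →
        (b ≠ a ∧ b ≠ u ∧ b ≠ v ∧ a ≠ u ∧ a ≠ v ∧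
          ((G.Adj u b ∧ G.Adj v a ∧ (¬ G.Adj v b ∨ ¬ G.Adj u a)) ∨
           (G.Adj u a ∧ G.Adj v b ∧ (¬ G.Adj v a ∨ ¬ G.Adj u b)))) := by
      rintro a b ⟨h1, h2, h3, h4, h5, h6⟩
      exact ⟨h1.symm, h4, h5, h2, h3, h6.symm⟩
    unfold Xor' at h ⊢
    rcases h with ⟨ha, hnp⟩ | ⟨hp, hna⟩
    · exact Or.inl ⟨G.adj_symm ha, fun hp' => hnp (psymm y x hp')⟩
    · exact Or.inr ⟨psymm x y hp, fun ha' => hna (G.adj_symm ha')⟩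
  loopless := by
    refine ⟨?_⟩
    intro x h
    rcases h with ⟨h1, -⟩ | ⟨⟨h1, -⟩, -⟩
    · exact G.loopless.irrefl x h1
    · exact h1 rfl
/-- A *labeled graph*: a finite simple graph whose vertices (a finite set of
natural numbers) carry a framing in `ZMod 2` and a sign (`true` = `+`, `false` = `-`). -/
structure LGraph where
  verts : Finset ℕ
  adj : ℕ → ℕ → Bool
  symm : ∀ x y, adj x y = adj y x
  loopless : ∀ x, adj x x = false
  adj_mem : ∀ x y, adj x y = true → x ∈ verts ∧ y ∈ verts
  fr : ℕ → ZMod 2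
  sgn : ℕ → Bool

namespace LGraph

/-- The adjacency matrix over `ZMod 2`, with framings on the diagonal. -/
def A (G : LGraph) : Matrix G.verts G.verts (ZMod 2) :=
  fun u v => if (u : ℕ) = (v : ℕ) then G.fr u else (if G.adj u v then 1 else 0)

/-- `corank (A(G) + E)` over `ZMod 2`. -/
noncomputable def corankAE (G : LGraph) : ℕ :=
  Fintype.card G.verts - (G.A + 1).rank

/-- `corank A(G)` over `ZMod 2`. -/
noncomputable def corankA (G : LGraph) : ℕ :=
  Fintype.card G.verts - G.A.rank

end LGraph
namespace LGraph

/-- `G'` agrees with `G` (adjacency, framing and sign) away from the set `S`. -/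
def sameOutside (G G' : LGraph) (S : Finset ℕ) : Prop :=
  (∀ x y, x ∉ S → y ∉ S → G'.adj x y = G.adj x y) ∧
  (∀ x, x ∉ S → G'.fr x = G.fr x ∧ G'.sgn x = G.sgn x)

/-- Ω1 (addition direction): `G'` is obtained from `G` by adding the isolated
vertex `v` with framing `0` and arbitrary sign. -/
def Omega1AddAt (G G' : LGraph) (v : ℕ) : Prop :=
  v ∉ G.verts ∧ G'.verts = insert v G.verts ∧ G'.fr v = 0 ∧
    (∀ x, G'.adj v x = false) ∧ sameOutside G G' {v}

/-- Ω2 (addition direction): `G'` is obtained from `G` by adding two vertices `u, v`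
with the same adjacencies with all other vertices, opposite signs, either
non-adjacent with framings `0` or adjacent with framings `1`. -/
def Omega2AddAt (G G' : LGraph) (u v : ℕ) : Prop :=
  u ≠ v ∧ u ∉ G.verts ∧ v ∉ G.verts ∧
    G'.verts = insert u (insert v G.verts) ∧
    G'.sgn u = !(G'.sgn v) ∧
    (∀ x, x ≠ u → x ≠ v → G'.adj u x = G'.adj v x) ∧
    ((G'.adj u v = false ∧ G'.fr u = 0 ∧ G'.fr v = 0) ∨
     (G'.adj u v = true ∧ G'.fr u = 1 ∧ G'.fr v = 1)) ∧
    sameOutside G G' {u, v}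

/-- Ω3 (forward direction) at vertices `u, v, w`, all labeled `(0,-)`, with `u`
adjacent exactly to `v` and `w`: the adjacency of `u` with every vertex lying in
exactly one of `N(v)`, `N(w)` is toggled and the signs of `v`,`w` become `+`. -/
def Omega3FwdAt (G G' : LGraph) (u v w : ℕ) : Prop :=
  u ≠ v ∧ u ≠ w ∧ v ≠ w ∧ u ∈ G.verts ∧ v ∈ G.verts ∧ w ∈ G.verts ∧
    G.fr u = 0 ∧ G.fr v = 0 ∧ G.fr w = 0 ∧
    G.sgn u = false ∧ G.sgn v = false ∧ G.sgn w = false ∧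
    (∀ x, G.adj u x = true ↔ (x = v ∨ x = w)) ∧
    G'.verts = G.verts ∧
    (∀ x, G'.adj u x = xor (xor (G.adj v x) (G.adj w x)) (G.adj u x)) ∧
    (∀ x y, x ≠ u → y ≠ u → G'.adj x y = G.adj x y) ∧
    G'.fr u = 0 ∧ G'.sgn u = false ∧
    G'.fr v = 0 ∧ G'.sgn v = true ∧ G'.fr w = 0 ∧ G'.sgn w = true ∧
    (∀ x, x ≠ u → x ≠ v → x ≠ w → (G'.fr x = G.fr x ∧ G'.sgn x = G.sgn x))

/-- The (one-sided) pivot toggling condition at `u, v` for the pair `x, y`: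
`x` is adjacent to `u`, `y` is adjacent to `v`, and `x` is not adjacent to `v`
or `y` is not adjacent to `u`. -/
def pivCond (G : LGraph) (u v x y : ℕ) : Prop :=
  G.adj u x = true ∧ G.adj v y = true ∧ (G.adj v x = false ∨ G.adj u y = false)

instance pivCond.instDecidable (G : LGraph) (u v x y : ℕ) :
    Decidable (pivCond G u v x y) := by
  unfold pivCond; infer_instance

/-- Ω4 at adjacent vertices `u, v` labeled `(0,α)`, `(0,β)`: `G'` is the pivot
`piv(G;u,v)` with the sign of `u` set to `-β` and the sign of `v` set to `-α`. -/
def Omega4At (G G' : LGraph) (u v : ℕ) : Prop :=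
  u ≠ v ∧ G.adj u v = true ∧ G.fr u = 0 ∧ G.fr v = 0 ∧
    G'.verts = G.verts ∧
    (∀ x y, G'.adj x y =
      (if x ≠ y ∧ x ∉ ({u, v} : Finset ℕ) ∧ y ∉ ({u, v} : Finset ℕ) ∧
          (pivCond G u v x y ∨ pivCond G u v y x)
       then !(G.adj x y) else G.adj x y)) ∧
    G'.fr u = 0 ∧ G'.fr v = 0 ∧
    G'.sgn u = !(G.sgn v) ∧ G'.sgn v = !(G.sgn u) ∧
    (∀ x, x ≠ u → x ≠ v → (G'.fr x = G.fr x ∧ G'.sgn x = G.sgn x))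

/-- Ω4' at a vertex `v` labeled `(1,α)`: `G'` is the local complement `LC(G;v)`
with the sign of `v` changed to `-α` and the framing of every neighbour of `v` toggled. -/
def Omega4pAt (G G' : LGraph) (v : ℕ) : Prop :=
  v ∈ G.verts ∧ G.fr v = 1 ∧
    G'.verts = G.verts ∧
    (∀ x y, G'.adj x y =
      (if x ≠ y ∧ G.adj v x = true ∧ G.adj v y = true
       then !(G.adj x y) else G.adj x y)) ∧
    G'.fr v = G.fr v ∧ G'.sgn v = !(G.sgn v) ∧
    (∀ x, x ≠ v → G'.sgn x = G.sgn x) ∧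
    (∀ x, x ≠ v → G'.fr x = (if G.adj v x then G.fr x + 1 else G.fr x))

/-- A single graph-move `Ω1`–`Ω4'` (in either direction). -/
inductive Move : LGraph → LGraph → Prop
  | o1a {G G' v} : Omega1AddAt G G' v → Move G G'
  | o1r {G G' v} : Omega1AddAt G' G v → Move G G'
  | o2a {G G' u v} : Omega2AddAt G G' u v → Move G G'
  | o2r {G G' u v} : Omega2AddAt G' G u v → Move G G'
  | o3f {G G' u v w} : Omega3FwdAt G G' u v w → Move G G'
  | o3b {G G' u v w} : Omega3FwdAt G' G u v w → Move G G'
  | o4 {G G' u v} : Omega4At G G' u v → Move G G'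
  | o4i {G G' u v} : Omega4At G' G u v → Move G G'
  | o4p {G G' v} : Omega4pAt G G' v → Move G G'
  | o4pi {G G' v} : Omega4pAt G' G v → Move G G'

end LGraph
namespace LGraph

/-- The labeled graph obtained from `G` by deleting the vertex `v`. -/
def delete (G : LGraph) (v : ℕ) : LGraph where
  verts := G.verts.erase v
  adj := fun x y => decide (x ≠ v) && decide (y ≠ v) && G.adj x y
  symm := by
    intro x y
    cases h1 : decide (x ≠ v) <;> cases h2 : decide (y ≠ v) <;>
      simp [h1, h2, G.symm x y]
  loopless := by intro x; simp [G.loopless x]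
  adj_mem := by
    intro x y h
    simp only [Bool.and_eq_true, decide_eq_true_eq] at h
    exact ⟨Finset.mem_erase.2 ⟨h.1.1, (G.adj_mem x y h.2).1⟩,
           Finset.mem_erase.2 ⟨h.1.2, (G.adj_mem x y h.2).2⟩⟩
  fr := G.fr
  sgn := G.sgn

end LGraph
namespace LGraph

/-- The underlying simple graph of a labeled graph, on its vertex set. -/
def toSimple (G : LGraph) : SimpleGraph G.verts where
  Adj x y := G.adj x y = true
  symm := by refine ⟨?_⟩; intro x y h; rwa [G.symm] at h
  loopless := by refine ⟨?_⟩; intro x h; rw [G.loopless] at h; exact Bool.false_ne_true h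

/-- One step: a graph-move `Ω4`, a graph-move `Ω4'`, or the deletion of a vertex. -/
inductive RStep : LGraph → LGraph → Prop
  | o4 {G G' u v} : Omega4At G G' u v → RStep G G'
  | o4p {G G' v} : Omega4pAt G G' v → RStep G G'
  | del (G : LGraph) (v : ℕ) : RStep G (G.delete v)

end LGraph

/-!
Reversing the arc cut off by a chord `v`, i.e. reflecting the points strictly between its two
endpoints, turns a chord diagram into one whose intersection graph is the local complement at
`v`: a chord crossing `v` keeps its outer endpoint and has its inner one reflected, so its
interval changes exactly by the arc of `v`, which toggles its linking with precisely the other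
chords crossing `v`. Pivoting along an edge `uv` is local complementation at `u`, `v`, `u` up to
exchanging `u` and `v`, and an induced subgraph is the intersection graph of the subdiagram
formed by the chords kept. On underlying graphs, `Ω4`, `Ω4'` and vertex deletion are pivoting,
local complementation and passing to an induced subgraph.
-/

open Function Set

theorem xor_xor_and_xor_iff {a a' l b b' : Prop} :
    Xor (Xor a (l ∧ b)) (Xor a' (l ∧ b')) ↔ Xor (Xor a a') (l ∧ Xor b b') := by
  unfold Xor
  tauto

theorem Bool.ite_not_eq_true_iff_xor (p : Prop) [Decidable p] (b : Bool) :
    (if p then !b else b) = true ↔ Xor (b = true) p := by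
  by_cases hp : p <;> cases b <;> simp [hp, Xor]

namespace SimpleGraph

variable {V W : Type*} {G : SimpleGraph V} {H : SimpleGraph W}

theorem localComp_adj {v x y : V} :
    (G.localComp v).Adj x y ↔ Xor (G.Adj x y) (x ≠ y ∧ G.Adj v x ∧ G.Adj v y) := Iff.rfl

theorem pivot_adj {u v x y : V} :
    (G.pivot u v).Adj x y ↔ Xor (G.Adj x y)
      (x ≠ y ∧ x ≠ u ∧ x ≠ v ∧ y ≠ u ∧ y ≠ v ∧
        ((G.Adj u x ∧ G.Adj v y ∧ (¬ G.Adj v x ∨ ¬ G.Adj u y)) ∨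
         (G.Adj u y ∧ G.Adj v x ∧ (¬ G.Adj v y ∨ ¬ G.Adj u x)))) := Iff.rfl

def Iso.localComp (e : G ≃g H) (v : V) : G.localComp v ≃g H.localComp (e v) where
  toEquiv := e.toEquiv
  map_rel_iff' := by
    simp only [localComp_adj, RelIso.coe_fn_toEquiv, Iso.map_adj_iff, ne_eq,
      EmbeddingLike.apply_eq_iff_eq, implies_true]

def pivotIsoLocalComp [DecidableEq V] {u v : V} (huv : G.Adj u v) :
    G.pivot u v ≃g ((G.localComp u).localComp v).localComp u where
  toEquiv := Equiv.swap u v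
  map_rel_iff' {x y} := by
    have := G.ne_of_adj huv
    have := G.adj_comm
    have : ∀ x, ¬ G.Adj x x := fun x => G.irrefl
    simp only [localComp_adj, pivot_adj, Equiv.swap_apply_def, Xor]
    split_ifs <;> subst_vars <;> grind

theorem Iso.isCircleGraph_iff (e : G ≃g H) : IsCircleGraph G ↔ IsCircleGraph H :=
  ⟨fun ⟨n, D, ⟨f⟩⟩ => ⟨n, D, ⟨e.symm.trans f⟩⟩, fun ⟨n, D, ⟨f⟩⟩ => ⟨n, D, ⟨e.trans f⟩⟩⟩

end SimpleGraph

namespace Fin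

variable {m : ℕ}

theorem mem_uIoo_iff_val {x y z : Fin m} :
    z ∈ uIoo x y ↔ min (x : ℕ) y < z ∧ (z : ℕ) < max (x : ℕ) y := by
  rw [uIoo, mem_Ioo]; rfl

def reflectArc (a b x : Fin m) : Fin m :=
  if h : a < x ∧ x < b then ⟨a + b - x, by rw [Fin.lt_def, Fin.lt_def] at h; omega⟩ else x

theorem val_reflectArc (a b x : Fin m) :
    (reflectArc a b x : ℕ) = if (a : ℕ) < x ∧ (x : ℕ) < b then (a : ℕ) + b - x else x := by
  simp only [reflectArc, Fin.lt_def]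
  split_ifs <;> rfl

theorem reflectArc_involutive (a b : Fin m) : Involutive (reflectArc a b) := fun x => by
  ext
  simp only [val_reflectArc]
  split_ifs <;> omega

theorem reflectArc_mem_uIoo_iff {a b c₁ c₂ z : Fin m} (hab : a < b)
    (hc : (c₁ = a ∧ c₂ = b) ∨ (c₁ ≠ a ∧ c₁ ≠ b ∧ c₂ ≠ a ∧ c₂ ≠ b))
    (hz₁ : z ≠ c₁) (hz₂ : z ≠ c₂) :
    reflectArc a b z ∈ uIoo (reflectArc a b c₁) (reflectArc a b c₂) ↔
      Xor (z ∈ uIoo c₁ c₂) (Xor (c₁ ∈ uIoo a b) (c₂ ∈ uIoo a b) ∧ z ∈ uIoo a b) := by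
  simp only [mem_uIoo_iff_val, val_reflectArc, Xor, Fin.ext_iff, Fin.lt_def] at *
  split_ifs <;> omega

end Fin

namespace ChordDiagram

variable {n : ℕ} (D : ChordDiagram n)

abbrev Chord : Type := {p : Fin (2 * n) // p < D.pair p}

theorem pair_injective : Injective D.pair := Involutive.injective D.invol

theorem linked_comm {x y : Fin (2 * n)} : D.Linked x y ↔ D.Linked y x := by
  unfold Linked; tauto

theorem not_linked_self (x : Fin (2 * n)) : ¬ D.Linked x x := by
  rintro (⟨h, -⟩ | ⟨h, -⟩) <;> exact h.false

theorem linked_pair_left {x y : Fin (2 * n)} : D.Linked (D.pair x) y ↔ D.Linked x y := by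
  unfold Linked
  rw [D.invol, min_comm (D.pair x), max_comm (D.pair x)]

theorem linked_iff_xor (x y : Fin (2 * n)) :
    D.Linked x y ↔ Xor (y ∈ uIoo x (D.pair x)) (D.pair y ∈ uIoo x (D.pair x)) := by
  have := Fin.val_ne_of_ne (D.fpf x)
  have := Fin.val_ne_of_ne (D.fpf y)
  rcases eq_or_ne y x with rfl | hyx
  · simp only [Linked, Fin.mem_uIoo_iff_val, Xor, Fin.lt_def, Fin.coe_min, Fin.coe_max]
    omega
  rcases eq_or_ne y (D.pair x) with rfl | hyp
  · simp only [D.invol, Linked, Fin.mem_uIoo_iff_val, Xor, Fin.lt_def, Fin.coe_min, Fin.coe_max]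
    omega
  have h₁ : D.pair y ≠ x := fun h => hyp (by rw [← h, D.invol])
  have h₂ : D.pair y ≠ D.pair x := fun h => hyx (D.pair_injective h)
  simp only [ne_eq, Fin.ext_iff] at hyx hyp h₁ h₂
  simp only [Linked, Fin.mem_uIoo_iff_val, Xor, Fin.lt_def, Fin.coe_min, Fin.coe_max]
  omega

theorem endpoints_ne_of_ne {c d : D.Chord} (hcd : c ≠ d) :
    c.1 ≠ d.1 ∧ c.1 ≠ D.pair d ∧ D.pair c ≠ d ∧ D.pair c ≠ D.pair d := by
  have hc := c.2
  have hd := d.2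
  refine ⟨fun h => hcd (Subtype.ext h), fun h => ?_, fun h => ?_,
    fun h => hcd (Subtype.ext (D.pair_injective h))⟩
  · rw [h, D.invol] at hc
    exact (hc.trans hd).false
  · rw [← h, D.invol] at hd
    exact (hc.trans hd).false

def chordOf (x : Fin (2 * n)) : D.Chord :=
  ⟨min x (D.pair x), by
    rcases le_total x (D.pair x) with h | h
    · rw [min_eq_left h]; exact h.lt_of_ne (D.fpf x).symm
    · rw [min_eq_right h, D.invol]; exact h.lt_of_ne (D.fpf x)⟩

theorem chordOf_val_eq (x : Fin (2 * n)) :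
    (D.chordOf x : Fin (2 * n)) = x ∨ (D.chordOf x : Fin (2 * n)) = D.pair x :=
  min_choice _ _

theorem chordOf_coe (c : D.Chord) : D.chordOf c = c :=
  Subtype.ext (min_eq_left c.2.le)

theorem chordOf_pair (x : Fin (2 * n)) : D.chordOf (D.pair x) = D.chordOf x :=
  Subtype.ext (by simp only [chordOf, D.invol, min_comm])

theorem linked_chordOf_left {x y : Fin (2 * n)} : D.Linked (D.chordOf x) y ↔ D.Linked x y := by
  rcases D.chordOf_val_eq x with h | h <;> rw [h]
  exact D.linked_pair_left

theorem igraph_adj_chordOf {x y : Fin (2 * n)} :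
    D.igraph.Adj (D.chordOf x) (D.chordOf y) ↔ D.Linked x y :=
  D.linked_chordOf_left.trans <| D.linked_comm.trans <| D.linked_chordOf_left.trans D.linked_comm

section Relabel

variable (σ : Equiv.Perm (Fin (2 * n)))

def relabel : ChordDiagram n where
  pair := σ ∘ D.pair ∘ σ.symm
  invol x := by simp [D.invol]
  fpf x h := D.fpf (σ.symm x) (σ.injective (by simpa using h))

theorem relabel_pair_apply (x : Fin (2 * n)) : (D.relabel σ).pair (σ x) = σ (D.pair x) := by
  simp [relabel]

def relabelChordEquiv : D.Chord ≃ (D.relabel σ).Chord where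
  toFun c := (D.relabel σ).chordOf (σ c)
  invFun c := D.chordOf (σ.symm c)
  left_inv c := by
    rcases (D.relabel σ).chordOf_val_eq (σ c) with h | h <;>
      simp only [h, relabel_pair_apply, Equiv.symm_apply_apply, chordOf_pair, chordOf_coe]
  right_inv c := by
    change (D.relabel σ).chordOf (σ (D.chordOf (σ.symm c))) = c
    rcases D.chordOf_val_eq (σ.symm c) with h | h
    · rw [h, Equiv.apply_symm_apply, chordOf_coe]
    · rw [h, ← relabel_pair_apply, Equiv.apply_symm_apply, chordOf_pair, chordOf_coe]

end Relabel

def localCompDiagram (v : D.Chord) : ChordDiagram n :=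
  D.relabel (Fin.reflectArc_involutive v.1 (D.pair v)).toPerm

theorem localCompDiagram_linked (v c d : D.Chord) :
    (D.localCompDiagram v).Linked (Fin.reflectArc v.1 (D.pair v) c)
        (Fin.reflectArc v.1 (D.pair v) d) ↔
      Xor (D.Linked c d) (c ≠ d ∧ D.Linked v c ∧ D.Linked v d) := by
  rcases eq_or_ne c d with rfl | hcd
  · exact iff_of_false (not_linked_self _ _) (by simp [Xor, not_linked_self])
  have hv : ∀ c : D.Chord, (c.1 = v.1 ∧ D.pair c = D.pair v) ∨
      (c.1 ≠ v.1 ∧ c.1 ≠ D.pair v ∧ D.pair c ≠ v.1 ∧ D.pair c ≠ D.pair v) := fun c => by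
    rcases eq_or_ne c v with rfl | hcv
    · exact Or.inl ⟨rfl, rfl⟩
    · exact Or.inr (D.endpoints_ne_of_ne hcv)
  obtain ⟨hdc, hdpc, hpdc, hpdpc⟩ := D.endpoints_ne_of_ne hcd.symm
  have hpair : ∀ x, (D.localCompDiagram v).pair (Fin.reflectArc v.1 (D.pair v) x) =
      Fin.reflectArc v.1 (D.pair v) (D.pair x) := D.relabel_pair_apply _
  rw [linked_iff_xor, hpair, hpair,
    Fin.reflectArc_mem_uIoo_iff v.2 (hv c) hdc hdpc,
    Fin.reflectArc_mem_uIoo_iff v.2 (hv c) hpdc hpdpc,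
    D.linked_iff_xor c, D.linked_iff_xor v c, D.linked_iff_xor v d]
  simpa only [ne_eq, hcd, not_false_eq_true, true_and] using xor_xor_and_xor_iff

def localCompIso (v : D.Chord) : D.igraph.localComp v ≃g (D.localCompDiagram v).igraph where
  toEquiv := D.relabelChordEquiv _
  map_rel_iff' {c d} := (igraph_adj_chordOf _).trans (D.localCompDiagram_linked v c d)

section Restrict

variable {K : Finset (Fin (2 * n))}

theorem even_card_of_pair_mem (hK : ∀ x ∈ K, D.pair x ∈ K) : Even K.card := by
  let f : Function.End K := fun x => ⟨D.pair x, hK x x.2⟩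
  have hf : f ^ 2 ^ 1 = 1 := funext fun x => Subtype.ext (D.invol x)
  have hfix : Fintype.card (fixedPoints f) = 0 :=
    Fintype.card_eq_zero_iff.2 ⟨fun x => D.fpf x.1 (congrArg Subtype.val x.2)⟩
  have := Equiv.Perm.card_fixedPoints_modEq (p := 2) hf
  rw [hfix, Fintype.card_coe] at this
  exact Nat.even_iff.2 this

variable (hK : ∀ x ∈ K, D.pair x ∈ K) {m : ℕ} (hm : K.card = 2 * m)

def restrict : ChordDiagram m where
  pair x := (K.orderIsoOfFin hm).symm ⟨D.pair (K.orderIsoOfFin hm x), hK _ (K.orderIsoOfFin hm x).2⟩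
  invol x := by
    simp only [OrderIso.apply_symm_apply, D.invol, Subtype.coe_eta, OrderIso.symm_apply_apply]
  fpf x h := D.fpf _ (congrArg Subtype.val ((K.orderIsoOfFin hm).symm_apply_eq.1 h))

theorem orderEmbOfFin_restrict_pair (x : Fin (2 * m)) :
    K.orderEmbOfFin hm ((D.restrict hK hm).pair x) = D.pair (K.orderEmbOfFin hm x) := by
  simp only [← Finset.coe_orderIsoOfFin_apply, restrict, OrderIso.apply_symm_apply]

theorem restrict_linked (x y : Fin (2 * m)) :
    (D.restrict hK hm).Linked x y ↔ D.Linked (K.orderEmbOfFin hm x) (K.orderEmbOfFin hm y) := by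
  have hmono := (K.orderEmbOfFin hm).strictMono
  unfold Linked
  simp only [← D.orderEmbOfFin_restrict_pair hK hm, ← hmono.monotone.map_min,
    ← hmono.monotone.map_max, hmono.lt_iff_lt]

def restrictIso : (D.restrict hK hm).igraph ≃g D.igraph.induce {c | c.1 ∈ K} where
  toFun c := ⟨⟨K.orderEmbOfFin hm c, by
    rw [← D.orderEmbOfFin_restrict_pair hK hm]
    exact (K.orderEmbOfFin hm).strictMono c.2⟩, K.orderEmbOfFin_mem hm c⟩
  invFun c := ⟨(K.orderIsoOfFin hm).symm ⟨c.1, c.2⟩, by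
    rw [← (K.orderEmbOfFin hm).lt_iff_lt, D.orderEmbOfFin_restrict_pair hK hm,
      ← Finset.coe_orderIsoOfFin_apply, OrderIso.apply_symm_apply]
    exact c.1.2⟩
  left_inv c := Subtype.ext <| by
    simp only [← Finset.coe_orderIsoOfFin_apply, Subtype.coe_eta, OrderIso.symm_apply_apply]
  right_inv c := Subtype.ext <| Subtype.ext <| by
    simp only [← Finset.coe_orderIsoOfFin_apply, OrderIso.apply_symm_apply]
  map_rel_iff' {c d} := (D.restrict_linked hK hm c d).symm

end Restrict

theorem isCircleGraph_igraph_induce (s : Set D.Chord) : IsCircleGraph (D.igraph.induce s) := by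
  classical
  let K := Finset.univ.filter fun x => D.chordOf x ∈ s
  have hK : ∀ x ∈ K, D.pair x ∈ K := by simp [K, chordOf_pair]
  have hs : {c : D.Chord | c.1 ∈ K} = s := by ext c; simp [K, chordOf_coe]
  obtain ⟨m, hm⟩ := D.even_card_of_pair_mem hK
  rw [← hs]
  exact ⟨m, D.restrict hK (by omega), ⟨(D.restrictIso hK _).symm⟩⟩

end ChordDiagram

namespace IsCircleGraph

variable {V : Type*} {G : SimpleGraph V}

theorem induce (h : IsCircleGraph G) (s : Set V) : IsCircleGraph (G.induce s) := by
  obtain ⟨n, D, ⟨e⟩⟩ := h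
  exact (e.induce e.injective.injOn.bijOn_image).isCircleGraph_iff.2
    (D.isCircleGraph_igraph_induce _)

theorem localComp (h : IsCircleGraph G) (v : V) : IsCircleGraph (G.localComp v) := by
  obtain ⟨n, D, ⟨e⟩⟩ := h
  exact ⟨n, D.localCompDiagram (e v), ⟨(e.localComp v).trans (D.localCompIso (e v))⟩⟩

theorem pivot (h : IsCircleGraph G) {u v : V} (huv : G.Adj u v) :
    IsCircleGraph (G.pivot u v) := by
  classical
  exact (SimpleGraph.pivotIsoLocalComp huv).isCircleGraph_iff.2
    (((h.localComp u).localComp v).localComp u)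

end IsCircleGraph

namespace LGraph

variable {G G' : LGraph}

theorem toSimple_adj {x y : G.verts} : G.toSimple.Adj x y ↔ G.adj x y = true := Iff.rfl

def isoOfVertsEq {H : SimpleGraph G.verts} (hverts : G'.verts = G.verts)
    (hadj : ∀ x y : G.verts, G'.adj x y = true ↔ H.Adj x y) : G'.toSimple ≃g H where
  toEquiv := Equiv.subtypeEquivRight (by simp [hverts])
  map_rel_iff' := (hadj _ _).symm

theorem Omega4At.isCircleGraph {u v : ℕ} (h : Omega4At G G' u v)
    (hG : IsCircleGraph G.toSimple) : IsCircleGraph G'.toSimple := by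
  obtain ⟨-, huv, -, -, hverts, hadj, -⟩ := h
  obtain ⟨hu, hv⟩ := G.adj_mem u v huv
  refine (isoOfVertsEq (H := G.toSimple.pivot ⟨u, hu⟩ ⟨v, hv⟩) hverts fun x y => ?_
    ).isCircleGraph_iff.2 (hG.pivot huv)
  rw [hadj, Bool.ite_not_eq_true_iff_xor, SimpleGraph.pivot_adj]
  simp only [toSimple_adj, ne_eq, Subtype.ext_iff, pivCond, Finset.mem_insert,
    Finset.mem_singleton, not_or, Bool.eq_false_iff, and_assoc]

theorem Omega4pAt.isCircleGraph {v : ℕ} (h : Omega4pAt G G' v)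
    (hG : IsCircleGraph G.toSimple) : IsCircleGraph G'.toSimple := by
  obtain ⟨hv, -, hverts, hadj, -⟩ := h
  refine (isoOfVertsEq (H := G.toSimple.localComp ⟨v, hv⟩) hverts fun x y => ?_
    ).isCircleGraph_iff.2 (hG.localComp _)
  rw [hadj, Bool.ite_not_eq_true_iff_xor, SimpleGraph.localComp_adj]
  simp only [toSimple_adj, ne_eq, Subtype.ext_iff]

def deleteIso (G : LGraph) (v : ℕ) :
    (G.delete v).toSimple ≃g G.toSimple.induce {x : G.verts | (x : ℕ) ≠ v} where
  toFun x := ⟨⟨x, (Finset.mem_erase.1 x.2).2⟩, (Finset.mem_erase.1 x.2).1⟩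
  invFun x := ⟨x.1, Finset.mem_erase.2 ⟨x.2, x.1.2⟩⟩
  map_rel_iff' {x y} := by
    change G.adj x y = true ↔ (decide ((x : ℕ) ≠ v) && decide ((y : ℕ) ≠ v) && G.adj x y) = true
    simp [(Finset.mem_erase.1 x.2).1, (Finset.mem_erase.1 y.2).1]

theorem RStep.isCircleGraph (h : RStep G G') (hG : IsCircleGraph G.toSimple) :
    IsCircleGraph G'.toSimple := by
  cases h with
  | o4 h => exact h.isCircleGraph hG
  | o4p h => exact h.isCircleGraph hG
  | del v => exact (G.deleteIso v).isCircleGraph_iff.2 (hG.induce _)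

end LGraph

/-- If a labeled graph is realisable (its underlying simple
graph is a circle graph) then so is every labeled graph obtained from it by a
finite sequence of moves `Ω4`, `Ω4'` and vertex deletions. In particular the
class of circle graphs is closed under local complementation, under pivoting
along an edge, and under taking induced subgraphs. -/
theorem realisable_closed_under_smoothing :
    (∀ G G' : LGraph, IsCircleGraph G.toSimple →
      Relation.ReflTransGen LGraph.RStep G G' → IsCircleGraph G'.toSimple) ∧
    (∀ (V : Type) [Fintype V] (G : SimpleGraph V) (v : V),
      IsCircleGraph G → IsCircleGraph (G.localComp v)) ∧
    (∀ (V : Type) [Fintype V] (G : SimpleGraph V) (u v : V), G.Adj u v →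
      IsCircleGraph G → IsCircleGraph (G.pivot u v)) ∧
    (∀ (V : Type) [Fintype V] (G : SimpleGraph V) (s : Set V),
      IsCircleGraph G → IsCircleGraph (G.induce s)) := by
  refine ⟨fun G G' hG hGG' => ?_, fun V _ G v hG => hG.localComp v,
    fun V _ G u v huv hG => hG.pivot huv, fun V _ G s hG => hG.induce s⟩
  induction hGG' with
  | refl => exact hG
  | tail _ hstep ih => exact hstep.isCircleGraph ih
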